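/- Let φ : [0,1] → ℝ be defined by φ(t) = (1/3)·[(3√3 − √2)·t·√(1 − t²) + t²/2 + 1]. Then φ attains its maximum on [0,1] at t₀ = √(1/2 + (1/6)·√((39 + 8√6)/379)), and the maximum value is φ(t₀) = (1/12)·(5 + √(117 − 24√6)). -/
import Mathlib


open Complex Metric

private lemma sqrt_aux_eq {a b : ℝ} (ha : 0 ≤ a) (hb : 0 ≤ b) (h : a ^ 2 = b ^ 2) : a = b := by
  rw [← Real.sqrt_sq ha, h, Real.sqrt_sq hb]

private lemma sqrt6_lt : Real.sqrt 6 < 3 := by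
  nlinarith [Real.sq_sqrt (by norm_num : (0:ℝ) ≤ 6), Real.sqrt_nonneg 6]

private lemma sqrt6_gt : (2:ℝ) < Real.sqrt 6 := by
  nlinarith [Real.sq_sqrt (by norm_num : (0:ℝ) ≤ 6), Real.sqrt_nonneg 6]

private lemma c_pos : 0 < 3 * Real.sqrt 3 - Real.sqrt 2 := by
  nlinarith [Real.sq_sqrt (by norm_num : (0:ℝ) ≤ 3), Real.sq_sqrt (by norm_num : (0:ℝ) ≤ 2),
    Real.sqrt_nonneg 3, Real.sqrt_nonneg 2]

private lemma s_gt_one {s : ℝ} (h : 45 ≤ s ^ 2) (hs : 0 ≤ s) : 1 < s := by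
  nlinarith

private lemma key_ineq {c s X Y : ℝ} (hc : 0 < c) (hs : 0 ≤ s) (hs2c : s ^ 2 = 4 * c ^ 2 + 1)
    (hsum : X ^ 2 + Y ^ 2 = 1 / 4) : c * X + Y / 2 ≤ s / 4 := by
  have h1 : (c * X + Y / 2) ^ 2 ≤ (s / 4) ^ 2 := by
    nlinarith [sq_nonneg (c * Y - X / 2)]
  nlinarith [h1, hs]

theorem stmt12 (φ : ℝ → ℝ)
    (hφ : ∀ t ∈ Set.Icc (0:ℝ) 1, φ t = (1 / 3) * ((3 * Real.sqrt 3 - Real.sqrt 2) * t * Real.sqrt (1 - t ^ 2)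
      + t ^ 2 / 2 + 1))
    (t₀ : ℝ)
    (ht₀ : t₀ = Real.sqrt (1 / 2 + (1 / 6) * Real.sqrt ((39 + 8 * Real.sqrt 6) / 379))) :
    IsMaxOn φ (Set.Icc (0:ℝ) 1) t₀ ∧
    φ t₀ = (1 / 12) * (5 + Real.sqrt (117 - 24 * Real.sqrt 6)) := by
  set s6 := Real.sqrt 6 with hs6def
  set c := 3 * Real.sqrt 3 - Real.sqrt 2 with hcdef
  have h6 : s6 ^ 2 = 6 := Real.sq_sqrt (by norm_num)
  have h6lt : s6 < 3 := sqrt6_lt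
  have h6gt : (2:ℝ) < s6 := sqrt6_gt
  have h3 : Real.sqrt 3 ^ 2 = 3 := Real.sq_sqrt (by norm_num)
  have h2 : Real.sqrt 2 ^ 2 = 2 := Real.sq_sqrt (by norm_num)
  have h32 : Real.sqrt 3 * Real.sqrt 2 = s6 := by
    rw [hs6def, ← Real.sqrt_mul (by norm_num)]; norm_num
  have hc2 : c ^ 2 = 29 - 6 * s6 := by
    rw [hcdef]; linear_combination 9 * h3 + h2 - 6 * h32
  have hcpos : 0 < c := c_pos
  set s := Real.sqrt (117 - 24 * s6) with hsdef
  have hNpos : (0:ℝ) < 117 - 24 * s6 := by linarith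
  have hs2 : s ^ 2 = 117 - 24 * s6 := Real.sq_sqrt (le_of_lt hNpos)
  have hsnn : 0 ≤ s := Real.sqrt_nonneg _
  have hs1 : 1 < s := s_gt_one (by linarith) hsnn
  have hs0 : s ≠ 0 := by linarith
  have hs2c : s ^ 2 = 4 * c ^ 2 + 1 := by rw [hs2, hc2]; ring
  have hc2s : c ^ 2 = (s ^ 2 - 1) / 4 := by linarith
  -- t₀ squared
  have hA : (0:ℝ) ≤ (39 + 8 * s6) / 379 := by positivity
  have hAsq : Real.sqrt ((39 + 8 * s6) / 379) ^ 2 = (39 + 8 * s6) / 379 :=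
    Real.sq_sqrt hA
  have hd : (1 / 6) * Real.sqrt ((39 + 8 * s6) / 379) = 1 / (2 * s) := by
    apply sqrt_aux_eq (by positivity) (by positivity)
    rw [mul_pow, hAsq, show (1 / (2 * s)) ^ 2 = 1 / (4 * s ^ 2) by ring, hs2,
      eq_div_iff (by positivity)]
    linear_combination (-(64:ℝ) / 1137) * h6
  have harg : (0:ℝ) ≤ 1 / 2 + 1 / (2 * s) := by positivity
  have ht0sq : t₀ ^ 2 = 1 / 2 + 1 / (2 * s) := by
    rw [ht₀, hd]; exact Real.sq_sqrt harg
  have ht0nn : 0 ≤ t₀ := by rw [ht₀]; exact Real.sqrt_nonneg _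
  have hdle : 1 / (2 * s) < 1 / 2 := by
    rw [div_lt_div_iff₀ (by linarith) (by norm_num)]; linarith
  have ht0le : t₀ ≤ 1 := by
    rw [ht₀]
    calc Real.sqrt (1 / 2 + (1 / 6) * Real.sqrt ((39 + 8 * s6) / 379))
        ≤ Real.sqrt 1 := Real.sqrt_le_sqrt (by rw [hd]; linarith)
      _ = 1 := Real.sqrt_one
  have ht0mem : t₀ ∈ Set.Icc (0:ℝ) 1 := ⟨ht0nn, ht0le⟩
  -- value at t₀
  have h1t0 : (0:ℝ) ≤ 1 - t₀ ^ 2 := by rw [ht0sq]; linarith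
  have hx0 : t₀ * Real.sqrt (1 - t₀ ^ 2) = c / s := by
    apply sqrt_aux_eq (by positivity) (by positivity)
    rw [mul_pow, Real.sq_sqrt h1t0, ht0sq, div_pow, hc2s]
    field_simp
    ring
  have hval : φ t₀ = (1 / 12) * (5 + s) := by
    rw [hφ t₀ ht0mem, mul_assoc, hx0, ht0sq,
      show c * (c / s) = c ^ 2 / s by ring, hc2s]
    field_simp
    ring
  refine ⟨?_, hval⟩
  rw [isMaxOn_iff]
  intro t ht
  rw [hφ t ht, hval]
  obtain ⟨htl, htr⟩ := ht
  have h1t : (0:ℝ) ≤ 1 - t ^ 2 := by nlinarith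
  set x := Real.sqrt (1 - t ^ 2) with hxdef
  have hx2 : x ^ 2 = 1 - t ^ 2 := Real.sq_sqrt h1t
  have hsum : (t * x) ^ 2 + (t ^ 2 - 1 / 2) ^ 2 = 1 / 4 := by
    linear_combination (t ^ 2) * hx2
  have hkey := key_ineq hcpos hsnn hs2c hsum
  linarith [hkey]
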